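/- arXiv:2310.00477 — 5 statements merged into one kernel-verified Lean document; each statement's English description precedes it below -/
import Mathlib

section
/- Let F be a field and let (A₁, A₂) be a pair of nonzero 2×2 nilpotent matrices over F. Then there exists g ∈ GL₂(F) and a nonzero α ∈ F such that either (g A₁ g⁻¹, g A₂ g⁻¹) = (E₁₂, α E₁₂) or (g A₁ g⁻¹, g A₂ g⁻¹) = (E₁₂, α E₂₁). -/
/-!
A square-zero 2×2 matrix has trace and determinant zero, so it has the form `!![a, b; c, -a]`
with `a² + bc = 0`; a basis adapted to the line `ker A = im A` conjugates it to `E₁₂`.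
Once `A₁ = E₁₂`, conjugation by any `!![x, y; 0, x]` still fixes `A₁`. For
`A₂ = !![a, b; c, -a]` the choice `!![c, -a; 0, c]` turns `A₂` into `c • E₂₁` when
`c ≠ 0`, and when `c = 0` it is already `b • E₁₂`.
-/

open Matrix

lemma Units.conj_mul {M : Type*} [Monoid M] (u v : Mˣ) (x : M) :
    (↑(u * v) : M) * x * ↑(u * v)⁻¹ = u * ((v : M) * x * ↑v⁻¹) * ↑u⁻¹ := by
  simp only [_root_.mul_inv_rev, Units.val_mul, mul_assoc]

namespace Matrix

variable {F : Type*} [Field F]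

lemma exists_eq_of_sq_eq_zero {A : Matrix (Fin 2) (Fin 2) F}
    (h : A ^ 2 = 0) : ∃ a b c : F, A = !![a, b; c, -a] ∧ a ^ 2 + b * c = 0 := by
  have htrace : A 1 1 = -A 0 0 := by
    rw [eq_neg_iff_add_eq_zero, add_comm, ← trace_fin_two]
    exact (isNilpotent_trace_of_isNilpotent ⟨2, h⟩).eq_zero
  have hdet : A.det = 0 := pow_eq_zero_iff two_ne_zero |>.mp <| by simp [← det_pow, h]
  rw [det_fin_two, htrace] at hdet
  refine ⟨A 0 0, A 0 1, A 1 0, ?_, by linear_combination -hdet⟩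
  rw [← htrace]
  exact eta_fin_two A

lemma ne_zero_or_ne_zero_of_sq_add_mul_eq_zero {a b c : F} (habc : a ^ 2 + b * c = 0)
    (hA : !![a, b; c, -a] ≠ 0) : b ≠ 0 ∨ c ≠ 0 := by
  by_contra! hbc
  obtain ⟨rfl, rfl⟩ := hbc
  obtain rfl : a = 0 := pow_eq_zero_iff two_ne_zero |>.mp (by simpa using habc)
  exact hA (by ext i j; fin_cases i <;> fin_cases j <;> simp)

lemma exists_conj_eq_E12_of_sq_eq_zero {A : Matrix (Fin 2) (Fin 2) F} (h : A ^ 2 = 0)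
    (hA : A ≠ 0) :
    ∃ g : GL (Fin 2) F, (g : Matrix _ _ F) * A * (↑g⁻¹ : Matrix _ _ F) = !![0, 1; 0, 0] := by
  obtain ⟨a, b, c, rfl, habc⟩ := exists_eq_of_sq_eq_zero h
  simp_rw [Units.mul_inv_eq_iff_eq_mul]
  -- the rows `r₁, r₂` of `g` satisfy `r₁ A = r₂ ≠ 0` and `r₂ A = 0`
  rcases ne_zero_or_ne_zero_of_sq_add_mul_eq_zero habc hA with hb | hc
  · refine ⟨GeneralLinearGroup.mkOfDetNeZero !![1, 0; a, b] (by simpa [det_fin_two]), ?_⟩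
    simpa [← sq, mul_comm, add_comm] using habc
  · refine ⟨GeneralLinearGroup.mkOfDetNeZero !![0, 1; c, -a] (by simpa [det_fin_two]), ?_⟩
    simpa [← sq, mul_comm, add_comm] using habc

lemma exists_conj_fixing_E12_of_sq_eq_zero {B : Matrix (Fin 2) (Fin 2) F} (h : B ^ 2 = 0)
    (hB : B ≠ 0) :
    ∃ (g : GL (Fin 2) F) (α : F), α ≠ 0 ∧
      (g : Matrix _ _ F) * !![0, 1; 0, 0] * (↑g⁻¹ : Matrix _ _ F) = !![0, 1; 0, 0] ∧
      ((g : Matrix _ _ F) * B * (↑g⁻¹ : Matrix _ _ F) = α • !![0, 1; 0, 0] ∨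
        (g : Matrix _ _ F) * B * (↑g⁻¹ : Matrix _ _ F) = α • !![0, 0; 1, 0]) := by
  obtain ⟨a, b, c, rfl, habc⟩ := exists_eq_of_sq_eq_zero h
  simp_rw [Units.mul_inv_eq_iff_eq_mul]
  by_cases hc : c = 0
  · have hb := (ne_zero_or_ne_zero_of_sq_add_mul_eq_zero habc hB).resolve_right (not_not_intro hc)
    subst hc
    obtain rfl : a = 0 := pow_eq_zero_iff two_ne_zero |>.mp (by simpa using habc)
    exact ⟨1, b, hb, by simp, Or.inl (by simp)⟩
  · refine ⟨GeneralLinearGroup.mkOfDetNeZero !![c, -a; 0, c] (by simpa [det_fin_two]), c, hc, ?_,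
      Or.inr ?_⟩
    · simp
    · simpa [← sq, mul_comm, add_comm] using habc

end Matrix

theorem stmt_1 (F : Type*) [Field F] (A₁ A₂ : Matrix (Fin 2) (Fin 2) F)
    (h₁ : A₁ ^ 2 = 0) (h₂ : A₂ ^ 2 = 0) (hA₁ : A₁ ≠ 0) (hA₂ : A₂ ≠ 0) :
    ∃ (g : GL (Fin 2) F) (α : F), α ≠ 0 ∧
      ((g : Matrix (Fin 2) (Fin 2) F) * A₁ * (↑g⁻¹ : Matrix (Fin 2) (Fin 2) F) = !![0, 1; 0, 0] ∧
        (g : Matrix (Fin 2) (Fin 2) F) * A₂ * (↑g⁻¹ : Matrix (Fin 2) (Fin 2) F) = α • !![0, 1; 0, 0]) ∨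
      ((g : Matrix (Fin 2) (Fin 2) F) * A₁ * (↑g⁻¹ : Matrix (Fin 2) (Fin 2) F) = !![0, 1; 0, 0] ∧
        (g : Matrix (Fin 2) (Fin 2) F) * A₂ * (↑g⁻¹ : Matrix (Fin 2) (Fin 2) F) = α • !![0, 0; 1, 0]) := by
  obtain ⟨g, hg⟩ := exists_conj_eq_E12_of_sq_eq_zero h₁ hA₁
  set B := (g : Matrix (Fin 2) (Fin 2) F) * A₂ * (↑g⁻¹ : Matrix (Fin 2) (Fin 2) F)
    with hB
  have hB_sq : B ^ 2 = 0 := by rw [hB, Units.conj_pow, h₂, mul_zero, zero_mul]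
  have hB_ne : B ≠ 0 := by rwa [hB, Ne, Units.mul_left_eq_zero, Units.mul_right_eq_zero]
  obtain ⟨k, α, hα, hkE, hkB⟩ := exists_conj_fixing_E12_of_sq_eq_zero hB_sq hB_ne
  have hA₁' : ((k * g : GL (Fin 2) F) : Matrix (Fin 2) (Fin 2) F) * A₁ *
      (↑(k * g)⁻¹ : Matrix (Fin 2) (Fin 2) F) = !![0, 1; 0, 0] := by
    rw [Units.conj_mul, hg, hkE]
  rw [hB, ← Units.conj_mul] at hkB
  rcases hkB with hkB | hkB
  · exact ⟨k * g, α, Or.inl ⟨hα, hA₁', hkB⟩⟩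
  · exact ⟨k * g, α, Or.inr ⟨hA₁', hkB⟩⟩
end

section
/- Let F be a field, α, α' ∈ F nonzero, and β, γ, δ, β', γ', δ' ∈ F. Set A₁ = A₁' = E₁₂, A₂ = α E₂₁, A₂' = α' E₂₁, A₃ = [[β, γ],[δ, -β]], A₃' = [[β', γ'],[δ', -β']]. If tr(AᵢAⱼ) = tr(Aᵢ'Aⱼ') for all 1 ≤ i < j ≤ 3 and tr(A₁A₂A₃) = tr(A₁'A₂'A₃'), then α = α', β = β', γ = γ', and δ = δ' (hence Aᵢ = Aᵢ' for all i). -/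
/-! The four traces read off the entries of A₃ and α: tr(A₁A₂) = α, tr(A₁A₃) = δ,
tr(A₂A₃) = αγ and tr(A₁A₂A₃) = αβ. Hence α and δ are determined, and β, γ after
cancelling α ≠ 0. -/

open Matrix

namespace Matrix

variable {R : Type*} [Semiring R]

lemma trace_E12_mul (M : Matrix (Fin 2) (Fin 2) R) : (!![0, 1; 0, 0] * M).trace = M 1 0 := by
  simp only [trace_fin_two, mul_apply, Fin.sum_univ_two]
  simp

lemma trace_E21_mul (M : Matrix (Fin 2) (Fin 2) R) : (!![0, 0; 1, 0] * M).trace = M 0 1 := by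
  simp only [trace_fin_two, mul_apply, Fin.sum_univ_two]
  simp

lemma trace_E12_mul_E21_mul (M : Matrix (Fin 2) (Fin 2) R) :
    (!![0, 1; 0, 0] * !![0, 0; 1, 0] * M).trace = M 0 0 := by
  simp only [trace_fin_two, mul_apply, Fin.sum_univ_two]
  simp

end Matrix

theorem stmt_5_general (F : Type*) [Field F] (α α' β γ δ β' γ' δ' : F)
    (hα : α ≠ 0)
    (A₁ A₂ A₃ A₁' A₂' A₃' : Matrix (Fin 2) (Fin 2) F)
    (hA₁ : A₁ = !![0, 1; 0, 0]) (hA₁' : A₁' = !![0, 1; 0, 0])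
    (hA₂ : A₂ = α • !![0, 0; 1, 0]) (hA₂' : A₂' = α' • !![0, 0; 1, 0])
    (hA₃ : A₃ = !![β, γ; δ, -β]) (hA₃' : A₃' = !![β', γ'; δ', -β'])
    (h12 : (A₁ * A₂).trace = (A₁' * A₂').trace)
    (h13 : (A₁ * A₃).trace = (A₁' * A₃').trace)
    (h23 : (A₂ * A₃).trace = (A₂' * A₃').trace)
    (h123 : (A₁ * A₂ * A₃).trace = (A₁' * A₂' * A₃').trace) :
    α = α' ∧ β = β' ∧ γ = γ' ∧ δ = δ' ∧ A₁ = A₁' ∧ A₂ = A₂' ∧ A₃ = A₃' := by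
  subst hA₁ hA₁' hA₂ hA₂' hA₃ hA₃'
  simp only [Matrix.mul_smul, Matrix.smul_mul, trace_smul, trace_E12_mul_E21_mul, trace_E12_mul,
    trace_E21_mul, of_apply, cons_val', cons_val_zero, cons_val_one, empty_val', cons_val_fin_one,
    smul_eq_mul, mul_one] at h12 h13 h23 h123
  subst h12 h13
  obtain rfl : γ = γ' := mul_left_cancel₀ hα h23
  obtain rfl : β = β' := mul_left_cancel₀ hα h123
  simp

theorem stmt_5 (F : Type*) [Field F] (α α' β γ δ β' γ' δ' : F)
    (hα : α ≠ 0) (hα' : α' ≠ 0)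
    (A₁ A₂ A₃ A₁' A₂' A₃' : Matrix (Fin 2) (Fin 2) F)
    (hA₁ : A₁ = !![0, 1; 0, 0]) (hA₁' : A₁' = !![0, 1; 0, 0])
    (hA₂ : A₂ = α • !![0, 0; 1, 0]) (hA₂' : A₂' = α' • !![0, 0; 1, 0])
    (hA₃ : A₃ = !![β, γ; δ, -β]) (hA₃' : A₃' = !![β', γ'; δ', -β'])
    (h12 : (A₁ * A₂).trace = (A₁' * A₂').trace)
    (h13 : (A₁ * A₃).trace = (A₁' * A₃').trace)
    (h23 : (A₂ * A₃).trace = (A₂' * A₃').trace)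
    (h123 : (A₁ * A₂ * A₃).trace = (A₁' * A₂' * A₃').trace) :
    α = α' ∧ β = β' ∧ γ = γ' ∧ δ = δ' ∧ A₁ = A₁' ∧ A₂ = A₂' ∧ A₃ = A₃' :=
  stmt_5_general F α α' β γ δ β' γ' δ' hα A₁ A₂ A₃ A₁' A₂' A₃' hA₁ hA₁' hA₂ hA₂' hA₃ hA₃' h12 h13
    h23 h123
end

section
/- Let F = F_q be a finite field. The number of GL₂(F_q)-orbits on triples of 2×2 nilpotent matrices over F_q under simultaneous conjugation is q³ + q² + q + 1. -/
/-!
Burnside's lemma in the form `#orbits * |G| = ∑ₐ |Stab A|`, for `G = GL₂(F_q)` acting on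
tuples `A` of square-zero matrices. The stabilizer of the zero tuple is `G`. If `A` has a nonzero
entry `N`, everything commuting with `N` is of the form `a + b N`, so `Stab A ≃ F_qˣ × C(A)`,
where `C(A)` is the set of square-zero matrices commuting with every entry of `A`. Exchanging the
order of summation in `∑ₐ |C(A)|`, the matrix `0` contributes `(q²)³` (there are `q²`
square-zero matrices) and each of the `q² - 1` others contributes `q³`, because the square-zero
matrices commuting with `M ≠ 0` are the multiples of `M`. Solving for `#orbits` gives
`q³ + q² + q + 1`.
-/

open Matrix MulAction

namespace Matrix

theorem isUnit_smul_one_add_of_sq_eq_zero {n R : Type*} [Fintype n] [DecidableEq n] [CommRing R]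
    {a : R} (ha : IsUnit a) {M : Matrix n n R} (hM : M ^ 2 = 0) : IsUnit (a • 1 + M) :=
  IsNilpotent.isUnit_add_left_of_commute ⟨2, hM⟩
    (Algebra.algebraMap_eq_smul_one (A := Matrix n n R) a ▸ ha.map (algebraMap R _))
    ((Commute.one_right M).smul_right a)

variable {F : Type*} [Field F]

theorem sq_eq_zero_iff_fin_two {N : Matrix (Fin 2) (Fin 2) F} :
    N ^ 2 = 0 ↔ N 1 1 = -N 0 0 ∧ N 0 0 * N 0 0 + N 0 1 * N 1 0 = 0 := by
  rw [pow_two, ← Matrix.ext_iff]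
  simp only [Fin.forall_fin_two, mul_apply, Fin.sum_univ_two, zero_apply]
  constructor
  · rintro ⟨⟨h00, h01⟩, h10, h11⟩
    refine ⟨?_, h00⟩
    by_cases hr : N 0 1 = 0
    · by_cases hs : N 1 0 = 0
      · simp only [hr, hs, mul_zero, add_zero, zero_add, mul_self_eq_zero] at h00 h11
        rw [h00, h11, neg_zero]
      · exact eq_neg_of_add_eq_zero_left <|
          (mul_eq_zero.mp (by linear_combination h10)).resolve_left hs
    · exact eq_neg_of_add_eq_zero_left <|
        (mul_eq_zero.mp (by linear_combination h01)).resolve_left hr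
  · rintro ⟨ht, hdet⟩
    rw [ht]
    refine ⟨⟨hdet, by ring⟩, by ring, by linear_combination hdet⟩

theorem exists_eq_smul_one_add_smul_of_commute {N X : Matrix (Fin 2) (Fin 2) F}
    (hN : N ^ 2 = 0) (hN0 : N ≠ 0) (hXN : Commute X N) : ∃ a b : F, X = a • 1 + b • N := by
  obtain ⟨ht, hdet⟩ := sq_eq_zero_iff_fin_two.mp hN
  rw [eta_fin_two N, ht, eta_fin_two X] at hXN ⊢
  rw [eta_fin_two N, ht] at hN0
  generalize N 0 0 = p, N 0 1 = r, N 1 0 = s at *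
  generalize X 0 0 = α, X 0 1 = β, X 1 0 = γ, X 1 1 = δ at *
  simp only [Commute, SemiconjBy, mul_fin_two, ← Matrix.ext_iff, Fin.forall_fin_two, of_apply,
    cons_val', cons_val_zero, cons_val_one, empty_val', cons_val_fin_one] at hXN
  obtain ⟨⟨c00, c01⟩, c10, c11⟩ := hXN
  simp only [← Matrix.ext_iff, Fin.forall_fin_two, add_apply, smul_apply, one_apply_eq,
    one_apply_ne zero_ne_one, one_apply_ne one_ne_zero, smul_eq_mul, of_apply, cons_val',
    cons_val_zero, cons_val_one, empty_val', cons_val_fin_one, mul_zero, mul_one, zero_add]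
  by_cases hr : r = 0
  · subst hr
    have hp : p = 0 := by simpa using hdet
    subst hp
    have hs : s ≠ 0 := by rintro rfl; exact hN0 (by simp [← Matrix.ext_iff])
    refine ⟨α, γ / s, ⟨by ring, ?_⟩, by field_simp, ?_⟩
    · have hsβ : s * β = 0 := by linear_combination -c11
      simpa using (mul_eq_zero.mp hsβ).resolve_left hs
    · have hsδ : s * δ = s * α := by linear_combination c10
      simpa using mul_left_cancel₀ hs hsδ
  · refine ⟨α - β / r * p, β / r, ⟨by ring, by field_simp⟩, ?_, ?_⟩
    · field_simp
      linear_combination -c00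
    · field_simp
      linear_combination -c01

/-- A square-zero matrix is `!![0, 0; x, 0]` or `!![x, r; -x²/r, -x]` with `r ≠ 0`; it is
recorded as `(r, x)`. -/
def sqEqZeroEquiv [DecidableEq F] : {N : Matrix (Fin 2) (Fin 2) F // N ^ 2 = 0} ≃ F × F where
  toFun N := (N.1 0 1, if N.1 0 1 = 0 then N.1 1 0 else N.1 0 0)
  invFun rx := if hr : rx.1 = 0 then ⟨!![0, 0; rx.2, 0], by simp [sq_eq_zero_iff_fin_two]⟩
    else ⟨!![rx.2, rx.1; -(rx.2 * rx.2) / rx.1, -rx.2], by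
      simp only [sq_eq_zero_iff_fin_two, of_apply, cons_val', cons_val_one, cons_val_fin_one,
        cons_val_zero, true_and]
      field_simp
      ring⟩
  left_inv N := by
    obtain ⟨ht, hdet⟩ := sq_eq_zero_iff_fin_two.mp N.2
    ext i j
    by_cases hr : N.1 0 1 = 0
    · have hp : N.1 0 0 = 0 := by simpa [hr] using hdet
      fin_cases i <;> fin_cases j <;> simp [hr, hp, ht]
    · have hs : N.1 1 0 = -(N.1 0 0 * N.1 0 0) / N.1 0 1 := by
        field_simp; linear_combination hdet
      fin_cases i <;> fin_cases j <;> simp [hr, hs, ht]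
  right_inv := by
    rintro ⟨r, x⟩
    by_cases hr : r = 0 <;> simp [hr]

theorem card_sq_eq_zero_fin_two :
    Nat.card {N : Matrix (Fin 2) (Fin 2) F // N ^ 2 = 0} = Nat.card F ^ 2 := by
  classical
  rw [Nat.card_congr sqEqZeroEquiv, Nat.card_prod, sq]

theorem smul_one_add_smul_inj {N : Matrix (Fin 2) (Fin 2) F} (hN : N ^ 2 = 0) (hN0 : N ≠ 0)
    {a b a' b' : F} : a • 1 + b • N = a' • 1 + b' • N ↔ a = a' ∧ b = b' := by
  refine ⟨fun h => ?_, by rintro ⟨rfl, rfl⟩; rfl⟩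
  have hNN : N * N = 0 := by rwa [← sq]
  have ha : a • N = a' • N := by
    simpa [add_mul, smul_mul_assoc, hNN] using congrArg (· * N) h
  obtain rfl := smul_left_injective F hN0 ha
  exact ⟨rfl, smul_left_injective F hN0 (add_left_cancel h)⟩

theorem sq_eq_zero_and_commute_iff {M X : Matrix (Fin 2) (Fin 2) F} (hM : M ^ 2 = 0)
    (hM0 : M ≠ 0) : X ^ 2 = 0 ∧ Commute M X ↔ ∃ c : F, c • M = X := by
  constructor
  · rintro ⟨hX, hMX⟩
    obtain ⟨a, b, rfl⟩ := exists_eq_smul_one_add_smul_of_commute hM hM0 hMX.symm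
    have hMM : M * M = 0 := by rwa [← sq]
    have ha : (a * a) • M = 0 := by
      simpa [sq, add_mul, mul_add, smul_mul_assoc, mul_smul_comm, smul_smul, hMM]
        using congrArg (· * M) hX
    have : a = 0 := mul_self_eq_zero.mp ((smul_eq_zero.mp ha).resolve_right hM0)
    exact ⟨b, by simp [this]⟩
  · rintro ⟨c, rfl⟩
    exact ⟨by rw [smul_pow, hM, smul_zero], (Commute.refl M).smul_right c⟩

theorem card_sq_eq_zero_commute {M : Matrix (Fin 2) (Fin 2) F} (hM : M ^ 2 = 0) (hM0 : M ≠ 0) :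
    Nat.card {X : Matrix (Fin 2) (Fin 2) F // X ^ 2 = 0 ∧ Commute M X} = Nat.card F := by
  rw [Nat.card_congr (Equiv.ofInjective _ (smul_left_injective F hM0))]
  exact Nat.card_congr (Equiv.subtypeEquivRight fun X => sq_eq_zero_and_commute_iff hM hM0)

end Matrix

theorem Fintype.sum_card_subtype_comm {α β : Type*} [Fintype α] [Fintype β]
    (r : α → β → Prop) :
    ∑ a, Nat.card {b // r a b} = ∑ b, Nat.card {a // r a b} := by
  rw [← Nat.card_sigma, ← Nat.card_sigma]
  exact Nat.card_congr <| (Equiv.subtypeProdEquivSigmaSubtype r).symm.trans <|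
    ((Equiv.prodComm α β).subtypeEquiv fun _ => Iff.rfl).trans
      (Equiv.subtypeProdEquivSigmaSubtype fun b a => r a b)

theorem MulAction.sum_card_stabilizer_eq_card_orbits_mul_card_group (G X : Type*) [Group G]
    [MulAction G X] [Fintype G] [Fintype X] :
    ∑ x : X, Nat.card (stabilizer G x) = Nat.card (orbitRel.Quotient G X) * Nat.card G := by
  rw [← Nat.card_prod, ← Nat.card_congr (sigmaFixedByEquivOrbitsProdGroup G X), Nat.card_sigma]
  exact Fintype.sum_card_subtype_comm fun x (g : G) => g • x = x

abbrev SqZeroTuple (ι n R : Type*) [Fintype n] [DecidableEq n] [CommRing R] :=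
  {A : ι → Matrix n n R // ∀ i, A i ^ 2 = 0}

namespace SqZeroTuple

variable {ι n R : Type*} [Fintype n] [DecidableEq n] [CommRing R]

instance : SMul (GL n R) (SqZeroTuple ι n R) where
  smul g A := ⟨fun i => g * A.1 i * g⁻¹, fun i => by
    rw [Units.conj_pow, A.2 i, mul_zero, zero_mul]⟩

@[simp]
theorem coe_smul (g : GL n R) (A : SqZeroTuple ι n R) (i : ι) :
    (g • A).1 i = g * A.1 i * g⁻¹ := rfl

instance : MulAction (GL n R) (SqZeroTuple ι n R) where
  one_smul A := Subtype.ext <| funext fun i => by simp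
  mul_smul g h A := Subtype.ext <| funext fun i => by simp [mul_assoc]

instance : Zero (SqZeroTuple ι n R) := ⟨⟨0, fun _ => by simp⟩⟩

theorem orbitRel_iff {A B : SqZeroTuple ι n R} :
    orbitRel (GL n R) _ A B ↔
      ∃ g : GL n R, ∀ i, (g : Matrix n n R) * A.1 i * (↑g⁻¹ : Matrix n n R) = B.1 i := by
  rw [orbitRel_apply, mem_orbit_symm]
  simp only [mem_orbit_iff, Subtype.ext_iff, funext_iff, coe_smul]

theorem mem_stabilizer_iff {g : GL n R} {A : SqZeroTuple ι n R} :
    g ∈ stabilizer (GL n R) A ↔ ∀ i, Commute (g : Matrix n n R) (A.1 i) := by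
  simp only [MulAction.mem_stabilizer_iff, Subtype.ext_iff, funext_iff, coe_smul,
    Units.mul_inv_eq_iff_eq_mul, Commute, SemiconjBy]

theorem card_commute [Finite ι] (M : Matrix n n R) :
    Nat.card {A : SqZeroTuple ι n R // ∀ i, Commute M (A.1 i)} =
      Nat.card {X : Matrix n n R // X ^ 2 = 0 ∧ Commute M X} ^ Nat.card ι := by
  rw [← Nat.card_fun]
  exact Nat.card_congr <| (Equiv.subtypeSubtypeEquivSubtypeInter
    (fun A : ι → Matrix n n R => ∀ i, A i ^ 2 = 0) (fun A => ∀ i, Commute M (A i))).trans <|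
    (Equiv.subtypeEquivRight fun _ => forall_and.symm).trans
      (Equiv.subtypePiEquivPi (p := fun _ X => X ^ 2 = 0 ∧ Commute M X))

variable {F : Type*} [Field F]

theorem card_stabilizer_of_ne_zero {A : SqZeroTuple ι (Fin 2) F} (hA : A.1 ≠ 0) :
    Nat.card (stabilizer (GL (Fin 2) F) A) = Nat.card Fˣ *
      Nat.card {M : Matrix (Fin 2) (Fin 2) F // M ^ 2 = 0 ∧ ∀ i, Commute M (A.1 i)} := by
  obtain ⟨i, hi⟩ := Function.ne_iff.mp hA
  let f : Fˣ × {M : Matrix (Fin 2) (Fin 2) F // M ^ 2 = 0 ∧ ∀ i, Commute M (A.1 i)} →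
      stabilizer (GL (Fin 2) F) A := fun aM =>
    ⟨(isUnit_smul_one_add_of_sq_eq_zero aM.1.isUnit aM.2.2.1).unit,
      mem_stabilizer_iff.mpr fun j => ((Commute.one_left _).smul_left _).add_left (aM.2.2.2 j)⟩
  rw [← Nat.card_prod]
  refine (Nat.card_eq_of_bijective f ⟨?_, ?_⟩).symm
  · rintro ⟨a, M, hM, hMA⟩ ⟨a', M', hM', hMA'⟩ h
    obtain ⟨c, rfl⟩ := (sq_eq_zero_and_commute_iff (A.2 i) hi).mp ⟨hM, (hMA i).symm⟩
    obtain ⟨c', rfl⟩ := (sq_eq_zero_and_commute_iff (A.2 i) hi).mp ⟨hM', (hMA' i).symm⟩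
    obtain ⟨haa', rfl⟩ := (smul_one_add_smul_inj (A.2 i) hi).mp (congrArg (fun g => g.1.1) h)
    obtain rfl := Units.ext haa'
    rfl
  · rintro ⟨g, hg⟩
    have hgA := mem_stabilizer_iff.mp hg
    obtain ⟨a, b, hab⟩ := exists_eq_smul_one_add_smul_of_commute (A.2 i) hi (hgA i)
    have ha : a ≠ 0 := by
      rintro rfl
      refine IsNilpotent.not_isUnit ⟨2, ?_⟩ g.isUnit
      rw [hab, zero_smul, zero_add, smul_pow, A.2 i, smul_zero]
    refine ⟨(Units.mk0 a ha, ⟨b • A.1 i, ?_, fun j => ?_⟩), ?_⟩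
    · rw [smul_pow, A.2 i, smul_zero]
    · rw [show b • A.1 i = g - a • 1 by rw [hab, add_sub_cancel_left]]
      exact (hgA j).sub_left ((Commute.one_left _).smul_left a)
    · exact Subtype.ext (Units.ext hab.symm)

section Counting

variable [Fintype ι] [DecidableEq ι] [Fintype F] [DecidableEq F]

theorem sum_card_stabilizer_add :
    ∑ A : SqZeroTuple ι (Fin 2) F, Nat.card (stabilizer (GL (Fin 2) F) A) +
        Nat.card Fˣ * Nat.card F ^ 2 =
      Nat.card (GL (Fin 2) F) + Nat.card Fˣ * ∑ A : SqZeroTuple ι (Fin 2) F,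
        Nat.card {M : Matrix (Fin 2) (Fin 2) F // M ^ 2 = 0 ∧ ∀ i, Commute M (A.1 i)} := by
  have hstab : stabilizer (GL (Fin 2) F) (0 : SqZeroTuple ι (Fin 2) F) = ⊤ :=
    (Subgroup.eq_top_iff' _).mpr fun g => mem_stabilizer_iff.mpr fun i => Commute.zero_right _
  have hcomm : Nat.card {M : Matrix (Fin 2) (Fin 2) F // M ^ 2 = 0 ∧
      ∀ i, Commute M ((0 : SqZeroTuple ι (Fin 2) F).1 i)} = Nat.card F ^ 2 := by
    rw [← card_sq_eq_zero_fin_two]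
    exact Nat.card_congr
      (Equiv.subtypeEquivRight fun M => and_iff_left fun i => Commute.zero_right M)
  have hne : ∀ A ∈ ({0}ᶜ : Finset (SqZeroTuple ι (Fin 2) F)),
      Nat.card (stabilizer (GL (Fin 2) F) A) = Nat.card Fˣ *
        Nat.card {M : Matrix (Fin 2) (Fin 2) F // M ^ 2 = 0 ∧ ∀ i, Commute M (A.1 i)} :=
    fun A hA => card_stabilizer_of_ne_zero fun h =>
      Finset.mem_compl.mp hA (Finset.mem_singleton.mpr (Subtype.ext h))
  rw [Fintype.sum_eq_add_sum_compl 0, Fintype.sum_eq_add_sum_compl 0, hstab, Subgroup.card_top,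
    hcomm, Finset.sum_congr rfl hne, ← Finset.mul_sum]
  ring

theorem sum_card_commute_add :
    ∑ A : SqZeroTuple ι (Fin 2) F,
        Nat.card {M : Matrix (Fin 2) (Fin 2) F // M ^ 2 = 0 ∧ ∀ i, Commute M (A.1 i)} +
      Nat.card F ^ Nat.card ι =
        Nat.card F ^ (2 * Nat.card ι) + Nat.card F ^ 2 * Nat.card F ^ Nat.card ι := by
  let Nil := {M : Matrix (Fin 2) (Fin 2) F // M ^ 2 = 0}
  have hswap : ∑ A : SqZeroTuple ι (Fin 2) F,
      Nat.card {M : Matrix (Fin 2) (Fin 2) F // M ^ 2 = 0 ∧ ∀ i, Commute M (A.1 i)} =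
        ∑ M : Nil, Nat.card {X // X ^ 2 = 0 ∧ Commute M.1 X} ^ Nat.card ι := by
    simp_rw [← card_commute]
    rw [← Fintype.sum_card_subtype_comm
      fun (A : SqZeroTuple ι (Fin 2) F) (M : Nil) => ∀ i, Commute M.1 (A.1 i)]
    exact Finset.sum_congr rfl fun A _ =>
      Nat.card_congr (Equiv.subtypeSubtypeEquivSubtypeInter _ _).symm
  have hzero : Nat.card {X : Matrix (Fin 2) (Fin 2) F // X ^ 2 = 0 ∧ Commute 0 X} =
      Nat.card F ^ 2 := by
    rw [← card_sq_eq_zero_fin_two]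
    exact Nat.card_congr (Equiv.subtypeEquivRight fun X => and_iff_left (Commute.zero_left X))
  have hne : ∀ M ∈ ({⟨0, by simp⟩}ᶜ : Finset Nil),
      Nat.card {X // X ^ 2 = 0 ∧ Commute M.1 X} ^ Nat.card ι = Nat.card F ^ Nat.card ι :=
    fun M hM => by
      rw [card_sq_eq_zero_commute M.2 fun h =>
        Finset.mem_compl.mp hM (Finset.mem_singleton.mpr (Subtype.ext h))]
  have hconst :
      ∑ _M : Nil, Nat.card F ^ Nat.card ι = Nat.card F ^ 2 * Nat.card F ^ Nat.card ι := by
    rw [Finset.sum_const, Finset.card_univ, ← Nat.card_eq_fintype_card, card_sq_eq_zero_fin_two,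
      smul_eq_mul]
  rw [hswap, Fintype.sum_eq_add_sum_compl ⟨0, by simp⟩, hzero, Finset.sum_congr rfl hne,
    ← hconst, Fintype.sum_eq_add_sum_compl ⟨0, by simp⟩, pow_mul]
  ring

theorem card_orbits_mul_card_GL_add :
    Nat.card (orbitRel.Quotient (GL (Fin 2) F) (SqZeroTuple ι (Fin 2) F)) *
          Nat.card (GL (Fin 2) F) + Nat.card Fˣ * (Nat.card F ^ 2 + Nat.card F ^ Nat.card ι) =
      Nat.card (GL (Fin 2) F) + Nat.card Fˣ *
        (Nat.card F ^ (2 * Nat.card ι) + Nat.card F ^ 2 * Nat.card F ^ Nat.card ι) := by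
  rw [← sum_card_commute_add, ← MulAction.sum_card_stabilizer_eq_card_orbits_mul_card_group]
  linear_combination (sum_card_stabilizer_add (ι := ι) (F := F))

end Counting

theorem card_orbits_fin_three [Fintype F] :
    Nat.card (orbitRel.Quotient (GL (Fin 2) F) (SqZeroTuple (Fin 3) (Fin 2) F)) =
      Fintype.card F ^ 3 + Fintype.card F ^ 2 + Fintype.card F + 1 := by
  classical
  have hcount := card_orbits_mul_card_GL_add (ι := Fin 3) (F := F)
  have hq : Fintype.card F = Nat.card Fˣ + 1 := by
    rw [← Nat.card_eq_fintype_card, Nat.card_eq_card_units_add_one]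
  rw [Matrix.card_GL_field, Fin.prod_univ_two, Nat.card_fin, Fin.val_zero, Fin.val_one, pow_zero,
    pow_one, hq, Nat.card_eq_card_units_add_one F] at hcount
  rw [hq]
  set u := Nat.card Fˣ
  have hG : ((u + 1) ^ 2 - 1) * ((u + 1) ^ 2 - (u + 1)) = u * (u + 1) * (u * (u + 2)) := by
    rw [Nat.sub_eq_of_eq_add (show (u + 1) ^ 2 = u * (u + 2) + 1 by ring),
      Nat.sub_eq_of_eq_add (show (u + 1) ^ 2 = u * (u + 1) + (u + 1) by ring), mul_comm]
  have hu : 0 < u := Nat.card_pos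
  rw [hG] at hcount
  refine Nat.eq_of_mul_eq_mul_right (by positivity : 0 < u * (u + 1) * (u * (u + 2))) ?_
  linear_combination hcount

end SqZeroTuple

theorem stmt_9 (F : Type*) [Field F] [Fintype F] (q : ℕ) (hq : Fintype.card F = q) :
    Nat.card (Quot (fun A B : {A : Fin 3 → Matrix (Fin 2) (Fin 2) F // ∀ i, A i ^ 2 = 0} =>
        ∃ g : GL (Fin 2) F, ∀ i,
          (g : Matrix (Fin 2) (Fin 2) F) * A.1 i * (↑g⁻¹ : Matrix (Fin 2) (Fin 2) F) = B.1 i))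
      = q ^ 3 + q ^ 2 + q + 1 := by
  rw [← hq, ← SqZeroTuple.card_orbits_fin_three]
  exact Nat.card_congr (Quot.congrRight fun A B => SqZeroTuple.orbitRel_iff.symm)
end

section
/- Let F be a field of characteristic 2 and let (A₁, A₂, A₃) and (B₁, B₂, B₃) be triples of 2×2 nilpotent matrices over F such that tr(AᵢAⱼ) = tr(BᵢBⱼ) for all 1 ≤ i < j ≤ 3. Then tr(A₁A₂A₃) = tr(B₁B₂B₃). -/
open Matrix

private lemma nil_entries {F : Type*} [Field F] (h2 : (2:F) = 0)
    (M : Matrix (Fin 2) (Fin 2) F) (hM : M ^ 2 = 0) :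
    M 1 1 = M 0 0 ∧ M 0 0 * M 0 0 + M 0 1 * M 1 0 = 0 := by
  have h00 : M 0 0 * M 0 0 + M 0 1 * M 1 0 = 0 := by
    have h := congrFun (congrFun hM 0) 0
    simpa [pow_two, Matrix.mul_apply, Fin.sum_univ_two] using h
  have h11 : M 1 0 * M 0 1 + M 1 1 * M 1 1 = 0 := by
    have h := congrFun (congrFun hM 1) 1
    simpa [pow_two, Matrix.mul_apply, Fin.sum_univ_two] using h
  have hs : (M 0 0 + M 1 1) ^ 2 = 0 := by
    linear_combination h00 + h11 + (M 0 0 * M 1 1 - M 0 1 * M 1 0) * h2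
  have hsum : M 0 0 + M 1 1 = 0 := by
    exact pow_eq_zero_iff (two_ne_zero) |>.mp hs
  exact ⟨by linear_combination hsum - M 0 0 * h2, h00⟩

private lemma key_sq {F : Type*} [Field F] (h2 : (2:F) = 0)
    (M N P : Matrix (Fin 2) (Fin 2) F)
    (hM : M ^ 2 = 0) (hN : N ^ 2 = 0) (hP : P ^ 2 = 0) :
    (M * N * P).trace ^ 2 = (M * N).trace * (N * P).trace * (M * P).trace := by
  obtain ⟨dM, rM⟩ := nil_entries h2 M hM
  obtain ⟨dN, rN⟩ := nil_entries h2 N hN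
  obtain ⟨dP, rP⟩ := nil_entries h2 P hP
  simp only [Matrix.trace, Matrix.diag, Matrix.mul_apply, Fin.sum_univ_two]
  rw [dM, dN, dP]
  set a1 := M 0 0; set b1 := M 0 1; set c1 := M 1 0
  set a2 := N 0 0; set b2 := N 0 1; set c2 := N 1 0
  set a3 := P 0 0; set b3 := P 0 1; set c3 := P 1 0
  linear_combination
    (c2*c2*b3*b3 + 2*b2*c2*b3*c3 + b2*b2*c3*c3 - 4*a2*a2*a3*a3) * rM +
    (c1*c1*b3*b3 + 2*b1*c1*b3*c3 + 4*b1*c1*a3*a3 + b1*b1*c3*c3) * rN +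
    (c1*c1*b2*b2 - 2*b1*c1*b2*c2 + b1*b1*c2*c2) * rP +
    (-(c1*c1*b2*c2*b3*b3) - c1*c1*b2*b2*b3*c3 - b1*c1*c2*c2*b3*b3
      - 2*b1*c1*b2*c2*b3*c3 - b1*c1*b2*b2*c3*c3 - b1*b1*c2*c2*b3*c3
      - b1*b1*b2*c2*c3*c3) * h2

theorem stmt_14 (F : Type*) [Field F] (hchar : ringChar F = 2)
    (A B : Fin 3 → Matrix (Fin 2) (Fin 2) F)
    (hA : ∀ i, A i ^ 2 = 0) (hB : ∀ i, B i ^ 2 = 0)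
    (htr : ∀ i j : Fin 3, i < j → (A i * A j).trace = (B i * B j).trace) :
    (A 0 * A 1 * A 2).trace = (B 0 * B 1 * B 2).trace := by
  haveI : CharP F 2 := hchar ▸ ringChar.charP F
  have h2 : (2:F) = 0 := by exact_mod_cast CharP.cast_eq_zero F 2
  have hx := key_sq h2 (A 0) (A 1) (A 2) (hA 0) (hA 1) (hA 2)
  have hy := key_sq h2 (B 0) (B 1) (B 2) (hB 0) (hB 1) (hB 2)
  have e01 := htr 0 1 (by decide)
  have e12 := htr 1 2 (by decide)
  have e02 := htr 0 2 (by decide)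
  set x := (A 0 * A 1 * A 2).trace
  set y := (B 0 * B 1 * B 2).trace
  have hsq : x ^ 2 = y ^ 2 := by rw [hx, hy, e01, e12, e02]
  have hz : (x - y) ^ 2 = 0 := by
    linear_combination hsq + (y * y - x * y) * h2
  have := pow_eq_zero_iff (two_ne_zero) |>.mp hz
  exact sub_eq_zero.mp this
end

section
/- Let F be an infinite field and let f : N₂^m → F be a GL₂(F)-invariant function that is a homogeneous polynomial function of positive total degree in the matrix entries. Then f(α₁ E₁₂, ..., α_m E₁₂) = 0 for all α₁, ..., α_m ∈ F. -/
open Matrix MvPolynomial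
lemma eval_mul_homog {σ R : Type*} [CommRing R] [Fintype σ] (f : MvPolynomial σ R) (d : ℕ)
    (hhom : f.IsHomogeneous d) (t : R) (x : σ → R) :
    eval (fun i => t * x i) f = t ^ d * eval x f := by
  rw [eval_eq', eval_eq', Finset.mul_sum]
  refine Finset.sum_congr rfl fun s hs => ?_
  have hdeg : ∑ i, s i = d := by
    have := hhom (mem_support_iff.mp hs)
    simpa [Finsupp.weight_apply, Finsupp.sum_fintype] using this
  calc coeff s f * ∏ i, (t * x i) ^ s i
      = coeff s f * ((∏ i, t ^ s i) * ∏ i, x i ^ s i) := by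
        rw [← Finset.prod_mul_distrib]; simp [mul_pow]
    _ = t ^ d * (coeff s f * ∏ i, x i ^ s i) := by
        rw [Finset.prod_pow_eq_pow_sum, hdeg]; ring

lemma exists_t (F : Type*) [Field F] [Infinite F] (d : ℕ) (hd : 0 < d) :
    ∃ t : F, t ≠ 0 ∧ t ^ d ≠ 1 := by
  have hne : (Polynomial.X ^ d - 1 : Polynomial F) ≠ 0 := by
    intro h
    have := congrArg (Polynomial.coeff · d) h
    simp [Polynomial.coeff_one, hd.ne'] at this
  have hfin : ({x : F | x ^ d = 1} ∪ {0}).Finite := by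
    refine Set.Finite.union (Set.Finite.subset (Polynomial.finite_setOf_isRoot hne) ?_)
      (Set.finite_singleton 0)
    intro x hx
    simp [Polynomial.IsRoot.def, Set.mem_setOf_eq.mp hx, sub_eq_zero]
  obtain ⟨t, ht⟩ := Set.Infinite.nonempty ((Set.infinite_univ (α := F)).diff hfin)
  exact ⟨t, fun h => ht.2 (Or.inr h), fun h => ht.2 (Or.inl h)⟩

theorem stmt_15 (F : Type*) [Field F] [Infinite F] (m : ℕ)
    (f : MvPolynomial (Fin m × Fin 2 × Fin 2) F) (d : ℕ) (hd : 0 < d)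
    (hhom : f.IsHomogeneous d)
    (hinv : ∀ (g : GL (Fin 2) F) (A : Fin m → Matrix (Fin 2) (Fin 2) F),
      (∀ i, A i ^ 2 = 0) →
      eval (fun p => ((g : Matrix (Fin 2) (Fin 2) F) * A p.1 *
          (↑g⁻¹ : Matrix (Fin 2) (Fin 2) F)) p.2.1 p.2.2) f
        = eval (fun p => A p.1 p.2.1 p.2.2) f) :
    ∀ α : Fin m → F,
      eval (fun p => (α p.1 • (!![0, 1; 0, 0] : Matrix (Fin 2) (Fin 2) F)) p.2.1 p.2.2) f = 0 := by
  intro α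
  obtain ⟨t, ht0, htd⟩ := exists_t F d hd
  set E : Matrix (Fin 2) (Fin 2) F := !![0, 1; 0, 0] with hE
  have hE2 : E * E = 0 := by
    ext i j; fin_cases i <;> fin_cases j <;> simp [hE, Matrix.mul_apply, Fin.sum_univ_two]
  set M : Matrix (Fin 2) (Fin 2) F := !![t, 0; 0, 1] with hM
  set N : Matrix (Fin 2) (Fin 2) F := !![t⁻¹, 0; 0, 1] with hN
  have hMN : M * N = 1 := by
    ext i j; fin_cases i <;> fin_cases j <;>
      simp [hM, hN, Matrix.mul_apply, Fin.sum_univ_two, mul_inv_cancel₀ ht0]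
  have hNM : N * M = 1 := by
    ext i j; fin_cases i <;> fin_cases j <;>
      simp [hM, hN, Matrix.mul_apply, Fin.sum_univ_two, inv_mul_cancel₀ ht0]
  let g : GL (Fin 2) F := ⟨M, N, hMN, hNM⟩
  have hA2 : ∀ i, (α i • E) ^ 2 = 0 := by
    intro i; rw [sq, smul_mul_smul_comm, hE2, smul_zero]
  have key := hinv g (fun i => α i • E) hA2
  have hconj : ∀ i, M * (α i • E) * N = (t * α i) • E := by
    intro i
    ext a b; fin_cases a <;> fin_cases b <;>
      simp [hM, hN, hE, Matrix.mul_apply, Fin.sum_univ_two, mul_comm]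
  have hcoe : (↑g : Matrix (Fin 2) (Fin 2) F) = M := rfl
  have hcoei : (↑g⁻¹ : Matrix (Fin 2) (Fin 2) F) = N := rfl
  rw [hcoe, hcoei] at key
  simp only [hconj] at key
  have hsm : (fun p : Fin m × Fin 2 × Fin 2 => ((t * α p.1) • E) p.2.1 p.2.2)
      = fun p => t * ((α p.1 • E) p.2.1 p.2.2) := by
    funext p; simp [Matrix.smul_apply, mul_assoc]
  rw [hsm, eval_mul_homog f d hhom t] at key
  have : (t ^ d - 1) * eval (fun p => (α p.1 • E) p.2.1 p.2.2) f = 0 := by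
    rw [sub_mul, key]; ring
  rcases mul_eq_zero.mp this with h | h
  · exact absurd (sub_eq_zero.mp h) htd
  · exact h
end
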